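/- arXiv:2506.15997 — 2 statements merged into one kernel-verified Lean document; each statement's English description precedes it below -/
import Mathlib

section
/- Let (G,D) be a standard pair with |D| = 1. Then G admits a strong orientation G⃗ with sdiam(G⃗) ≤ 6. -/
open SimpleGraph

variable {V : Type*}

/-- A graph is bridgeless if no edge is a bridge. -/
def IsBridgeless (G : SimpleGraph V) : Prop := ∀ e : Sym2 V, ¬ G.IsBridge e

/-- `R` is an orientation of `G`: every arc of `R` is an edge of `G`, every edge of `G`
receives exactly one direction. -/
def IsOrientation (G : SimpleGraph V) (R : V → V → Prop) : Prop :=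
  (∀ u v, R u v → G.Adj u v) ∧ (∀ u v, G.Adj u v → (R u v ∨ R v u)) ∧
  (∀ u v, R u v → ¬ R v u)

/-- There is a directed walk of length `n` from `u` to `v` along the relation `R`. -/
def HasDirWalk (R : V → V → Prop) (u v : V) (n : ℕ) : Prop :=
  ∃ f : Fin (n + 1) → V, f 0 = u ∧ f (Fin.last n) = v ∧
    ∀ i : Fin n, R (f i.castSucc) (f i.succ)

/-- `R` is strongly connected. -/
def IsStrong (R : V → V → Prop) : Prop := ∀ u v : V, ∃ n, HasDirWalk R u v n

/-- `R` is strongly connected within the vertex set `W`. -/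
def IsStrongOn (R : V → V → Prop) (W : Set V) : Prop :=
  ∀ u ∈ W, ∀ v ∈ W, ∃ n, HasDirWalk R u v n

/-- Directed distance `∂(u,v)`: length of a shortest directed path from `u` to `v`. -/
noncomputable def ddist (R : V → V → Prop) (u v : V) : ℕ := sInf {n | HasDirWalk R u v n}

/-- `θ(u,v) = max{∂(u,v), ∂(v,u)}`. -/
noncomputable def theta (R : V → V → Prop) (u v : V) : ℕ := max (ddist R u v) (ddist R v u)

/-- The diameter of a (strong) orientation. -/
noncomputable def diamOr [Fintype V] (R : V → V → Prop) : ℕ :=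
  Finset.univ.sup fun p : V × V => theta R p.1 p.2

/-- The oriented diameter of `G`. -/
noncomputable def orientedDiam [Fintype V] (G : SimpleGraph V) : ℕ :=
  sInf {d | ∃ R : V → V → Prop, IsOrientation G R ∧ IsStrong R ∧ diamOr R = d}

/-- `A` is the arc set of a strongly connected subdigraph of `R` containing `u` and `v`. -/
def IsStrongSubOn (R : V → V → Prop) (u v : V) (A : Set (V × V)) : Prop :=
  (∀ p ∈ A, R p.1 p.2) ∧
  (∀ x ∈ insert u (insert v (Prod.fst '' A ∪ Prod.snd '' A)),
   ∀ y ∈ insert u (insert v (Prod.fst '' A ∪ Prod.snd '' A)),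
     Relation.ReflTransGen (fun a b => (a, b) ∈ A) x y)

/-- Strong distance `sd(u,v)`: minimum number of arcs of a strong subdigraph containing
`u` and `v`. -/
noncomputable def sdist (R : V → V → Prop) (u v : V) : ℕ :=
  sInf {n | ∃ A : Set (V × V), A.Finite ∧ A.ncard = n ∧ IsStrongSubOn R u v A}

/-- The strong diameter of a (strong) orientation. -/
noncomputable def sdiamOr [Fintype V] (R : V → V → Prop) : ℕ :=
  Finset.univ.sup fun p : V × V => sdist R p.1 p.2

/-- The oriented strong diameter of `G`. -/
noncomputable def orientedSDiam [Fintype V] (G : SimpleGraph V) : ℕ :=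
  sInf {d | ∃ R : V → V → Prop, IsOrientation G R ∧ IsStrong R ∧ sdiamOr R = d}

/-- `D` is a dominating set of `G`. -/
def IsDominating (G : SimpleGraph V) (D : Set V) : Prop :=
  ∀ v ∉ D, ∃ u ∈ D, G.Adj u v

/-- The domination number of `G`. -/
noncomputable def dominationNumber [Fintype V] (G : SimpleGraph V) : ℕ :=
  sInf {n | ∃ D : Set V, D.ncard = n ∧ IsDominating G D}

/-- `v` is associated with an isolated triangle. -/
def HasIsolatedTriangle (G : SimpleGraph V) (v : V) : Prop :=
  ∃ v₁ v₂ : V, G.Adj v v₁ ∧ G.Adj v₁ v₂ ∧ G.Adj v₂ v ∧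
    (G.neighborSet v₁).ncard = 2 ∧ (G.neighborSet v₂).ncard = 2

/-- `(G, D)` is a standard pair. -/
def IsStandardPair (G : SimpleGraph V) (D : Set V) : Prop :=
  IsBridgeless G ∧
  (∀ u ∈ D, ∀ v ∈ D, ¬ G.Adj u v) ∧
  (∀ v ∉ D, ∃! u, u ∈ D ∧ G.Adj u v) ∧
  (∀ v ∈ D, HasIsolatedTriangle G v)

/-- `H` is an alternative subgraph of `G` with respect to the dominating set `D`. -/
def IsAlternative (G : SimpleGraph V) (D : Set V) (H : G.Subgraph) : Prop :=
  IsBridgeless H.coe ∧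
  (H.verts ∩ D).Nonempty ∧
  (∀ x ∈ H.verts ∩ D, ∃ a b : V, a ≠ b ∧ a ∉ D ∧ b ∉ D ∧ H.Adj x a ∧ H.Adj x b ∧
    ∀ c, c ∉ D → H.Adj x c → c = a ∨ c = b) ∧
  (∀ y ∈ H.verts, y ∉ D → ∃ x ∈ H.verts ∩ D, H.Adj x y)

/-- `d_i(H⃗)`: maximum of `θ(u,v)` over pairs `u, v ∈ W` with `|{u,v} ∩ D| = i`. -/
noncomputable def dPairs (R : V → V → Prop) (W D : Set V) (i : ℕ) : ℕ :=
  sSup {k | ∃ u ∈ W, ∃ v ∈ W, ({u, v} ∩ D).ncard = i ∧ theta R u v = k}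

/-- `m(H⃗) = max{d₀ − 2, d₁ − 1, d₂}`. -/
noncomputable def mOf (R : V → V → Prop) (W D : Set V) : ℕ :=
  max (dPairs R W D 0 - 2) (max (dPairs R W D 1 - 1) (dPairs R W D 2))

/-- The graph obtained from `G` by subdividing the edge `uv` with a new vertex `none`. -/
def subdivide (G : SimpleGraph V) (u v : V) : SimpleGraph (Option V) :=
  SimpleGraph.fromRel fun a b =>
    match a, b with
    | some x, some y => G.Adj x y ∧ ¬(x = u ∧ y = v) ∧ ¬(x = v ∧ y = u)
    | some x, none => x = u ∨ x = v
    | none, _ => False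

/-- The graph obtained from `G` by attaching a pendant triangle at `v`. -/
def pendantTriangle (G : SimpleGraph V) (v : V) : SimpleGraph (V ⊕ Fin 2) :=
  SimpleGraph.fromRel fun a b =>
    match a, b with
    | Sum.inl x, Sum.inl y => G.Adj x y
    | Sum.inl x, Sum.inr _ => x = v
    | Sum.inr _, Sum.inl _ => False
    | Sum.inr i, Sum.inr j => i ≠ j

/-- `G` has a Hamiltonian path with endpoints `u` and `v`. -/
def HasHamiltonianPathBetween (G : SimpleGraph V) (u v : V) : Prop :=
  ∃ p : G.Walk u v, p.IsPath ∧ ∀ w : V, w ∈ p.support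

/-! The dominating vertex `d` is adjacent to every other vertex, and since no edge `dv` is a
bridge, every `v ≠ d` also has a neighbour other than `d`. Take a maximal independent set `A`
of `G - d` and orient `d → A → V ∖ (A ∪ {d}) → d`, the remaining edges arbitrarily. Every
vertex then lies on a directed triangle through `d`, and the triangles through `u` and through
`v` together form a strong subdigraph with at most six arcs containing both. -/

open Relation

section DirectedWalks

variable {R : V → V → Prop}

lemma hasDirWalk_zero (u : V) : HasDirWalk R u u 0 :=
  ⟨fun _ => u, rfl, rfl, fun i => i.elim0⟩

lemma HasDirWalk.cons {u v w : V} {n : ℕ} (huv : R u v) (h : HasDirWalk R v w n) :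
    HasDirWalk R u w (n + 1) := by
  obtain ⟨f, hf0, hfl, hf⟩ := h
  refine ⟨Fin.cons u f, rfl, by rwa [← Fin.succ_last, Fin.cons_succ], fun i => ?_⟩
  induction i using Fin.cases with
  | zero => simpa [hf0] using huv
  | succ j => simpa [← Fin.succ_castSucc] using hf j

lemma exists_hasDirWalk_of_reflTransGen {u v : V} (h : ReflTransGen R u v) :
    ∃ n, HasDirWalk R u v n := by
  induction h using ReflTransGen.head_induction_on with
  | refl => exact ⟨0, hasDirWalk_zero v⟩
  | head huw _ ih =>
    obtain ⟨n, hn⟩ := ih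
    exact ⟨n + 1, hn.cons huw⟩

end DirectedWalks

section StrongSubdigraphs

variable {R : V → V → Prop} {A B : Set (V × V)} {u v w : V}

lemma isStrongSubOn_of_hub (harcs : ∀ p ∈ A, R p.1 p.2)
    (hhub : ∀ x ∈ insert u (insert v (Prod.fst '' A ∪ Prod.snd '' A)),
      ReflTransGen (fun a b => (a, b) ∈ A) x w ∧ ReflTransGen (fun a b => (a, b) ∈ A) w x) :
    IsStrongSubOn R u v A :=
  ⟨harcs, fun x hx y hy => (hhub x hx).1.trans (hhub y hy).2⟩

lemma IsStrongSubOn.symm (h : IsStrongSubOn R u v A) : IsStrongSubOn R v u A := by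
  rwa [IsStrongSubOn, Set.insert_comm]

lemma IsStrongSubOn.reflTransGen (h : IsStrongSubOn R u v A) : ReflTransGen R u v :=
  ReflTransGen.mono (fun _ _ hab => h.1 _ hab) _ _ (h.2 u (by simp) v (by simp))

lemma IsStrongSubOn.union (hA : IsStrongSubOn R u w A) (hB : IsStrongSubOn R w v B) :
    IsStrongSubOn R u v (A ∪ B) := by
  refine isStrongSubOn_of_hub (w := w) (fun p hp => hp.elim (hA.1 p) (hB.1 p)) fun x hx => ?_
  have hwA : w ∈ insert u (insert w (Prod.fst '' A ∪ Prod.snd '' A)) := by simp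
  have hwB : w ∈ insert w (insert v (Prod.fst '' B ∪ Prod.snd '' B)) := by simp
  have hmono (C : Set (V × V)) (hC : C ⊆ A ∪ B) {a b : V} :
      ReflTransGen (fun a b => (a, b) ∈ C) a b → ReflTransGen (fun a b => (a, b) ∈ A ∪ B) a b :=
    ReflTransGen.mono (fun _ _ h => hC h) a b
  simp only [Set.image_union, Set.mem_insert_iff, Set.mem_union] at hx
  have hx' : x ∈ insert u (insert w (Prod.fst '' A ∪ Prod.snd '' A)) ∨
      x ∈ insert w (insert v (Prod.fst '' B ∪ Prod.snd '' B)) := by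
    simp only [Set.mem_insert_iff, Set.mem_union]; tauto
  rcases hx' with hx' | hx'
  · exact ⟨hmono A Set.subset_union_left (hA.2 x hx' w hwA),
      hmono A Set.subset_union_left (hA.2 w hwA x hx')⟩
  · exact ⟨hmono B Set.subset_union_right (hB.2 x hx' w hwB),
      hmono B Set.subset_union_right (hB.2 w hwB x hx')⟩

lemma isStrongSubOn_empty (u : V) : IsStrongSubOn R u u ∅ :=
  ⟨by simp, fun x hx y hy => by simp_all [ReflTransGen.refl]⟩

lemma isStrongSubOn_triangle {x y : V} (hux : R u x) (hxy : R x y) (hyu : R y u)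
    (hv : v = x ∨ v = y) : IsStrongSubOn R u v {(u, x), (x, y), (y, u)} := by
  refine isStrongSubOn_of_hub (w := u) (by simp [hux, hxy, hyu]) fun z hz => ?_
  have hz' : z = u ∨ z = x ∨ z = y := by
    rcases hv with rfl | rfl <;>
    simp only [Set.image_insert_eq, Set.image_singleton, Set.mem_insert_iff, Set.mem_union,
      Set.mem_singleton_iff] at hz <;>
    tauto
  have hux' : ReflTransGen (fun a b => (a, b) ∈ ({(u, x), (x, y), (y, u)} : Set (V × V))) u x :=
    .single (by simp)
  have hxy' : ReflTransGen (fun a b => (a, b) ∈ ({(u, x), (x, y), (y, u)} : Set (V × V))) x y :=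
    .single (by simp)
  have hyu' : ReflTransGen (fun a b => (a, b) ∈ ({(u, x), (x, y), (y, u)} : Set (V × V))) y u :=
    .single (by simp)
  rcases hz' with rfl | rfl | rfl
  · exact ⟨.refl, .refl⟩
  · exact ⟨hxy'.trans hyu', hux'⟩
  · exact ⟨hyu', hux'.trans hxy'⟩

lemma sdist_le_ncard (hA : A.Finite) (h : IsStrongSubOn R u v A) : sdist R u v ≤ A.ncard :=
  Nat.sInf_le ⟨A, hA, rfl, h⟩

end StrongSubdigraphs

section Hub

variable {R : V → V → Prop}

lemma isStrong_of_forall_isStrongSubOn (h : ∀ u v, ∃ A, IsStrongSubOn R u v A) : IsStrong R :=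
  fun u v => exists_hasDirWalk_of_reflTransGen (h u v).choose_spec.reflTransGen

lemma sdiamOr_le_of_forall_isStrongSubOn [Fintype V] {k : ℕ}
    (h : ∀ u v, ∃ A, A.Finite ∧ A.ncard ≤ k ∧ IsStrongSubOn R u v A) : sdiamOr R ≤ k :=
  Finset.sup_le fun ⟨u, v⟩ _ => by
    obtain ⟨A, hfin, hcard, hA⟩ := h u v
    exact (sdist_le_ncard hfin hA).trans hcard

lemma exists_isStrongSubOn_of_hub {d : V} {k : ℕ}
    (h : ∀ u, ∃ A, A.Finite ∧ A.ncard ≤ k ∧ IsStrongSubOn R d u A) (u v : V) :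
    ∃ A, A.Finite ∧ A.ncard ≤ 2 * k ∧ IsStrongSubOn R u v A := by
  obtain ⟨A, hAfin, hAcard, hA⟩ := h u
  obtain ⟨B, hBfin, hBcard, hB⟩ := h v
  refine ⟨A ∪ B, hAfin.union hBfin, ?_, hA.symm.union hB⟩
  calc (A ∪ B).ncard ≤ A.ncard + B.ncard := Set.ncard_union_le A B
    _ ≤ 2 * k := by omega

lemma isStrong_and_sdiamOr_le_of_directed_triangles [Fintype V] (d : V)
    (h : ∀ u ≠ d, ∃ x y, R d x ∧ R x y ∧ R y d ∧ (u = x ∨ u = y)) :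
    IsStrong R ∧ sdiamOr R ≤ 6 := by
  have hd : ∀ u, ∃ A, A.Finite ∧ A.ncard ≤ 3 ∧ IsStrongSubOn R d u A := by
    intro u
    by_cases hu : u = d
    · exact ⟨∅, Set.finite_empty, by simp, hu ▸ isStrongSubOn_empty u⟩
    obtain ⟨x, y, hdx, hxy, hyd, hux⟩ := h u hu
    refine ⟨_, Set.toFinite _, ?_, isStrongSubOn_triangle hdx hxy hyd hux⟩
    exact (Set.ncard_insert_le _ _).trans (by grw [Set.ncard_insert_le, Set.ncard_singleton])
  have huv := exists_isStrongSubOn_of_hub hd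
  exact ⟨isStrong_of_forall_isStrongSubOn fun u v => (huv u v).imp fun _ hA => hA.2.2,
    sdiamOr_le_of_forall_isStrongSubOn huv⟩

end Hub

section Orientation

variable [LinearOrder V]

def cyclicClassOrientation (G : SimpleGraph V) (c : V → Fin 3) (u v : V) : Prop :=
  G.Adj u v ∧ (c v = c u + 1 ∨ (c u = c v ∧ u < v))

lemma isOrientation_cyclicClassOrientation (G : SimpleGraph V) (c : V → Fin 3) :
    IsOrientation G (cyclicClassOrientation G c) := by
  have hcyc : ∀ i j : Fin 3, i ≠ j → j = i + 1 ∨ i = j + 1 := by decide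
  have hasymm : ∀ i j : Fin 3, j = i + 1 → i ≠ j + 1 ∧ i ≠ j := by decide
  refine ⟨fun u v h => h.1, fun u v huv => ?_, fun u v ⟨_, h⟩ ⟨_, h'⟩ => ?_⟩
  · by_cases hc : c u = c v
    · rcases huv.ne.lt_or_gt with hlt | hlt
      · exact .inl ⟨huv, .inr ⟨hc, hlt⟩⟩
      · exact .inr ⟨huv.symm, .inr ⟨hc.symm, hlt⟩⟩
    · rcases hcyc _ _ hc with hc | hc
      · exact .inl ⟨huv, .inl hc⟩
      · exact .inr ⟨huv.symm, .inl hc⟩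
  · rcases h with h | ⟨hc, hlt⟩ <;> rcases h' with h' | ⟨hc', hlt'⟩
    · exact (hasymm _ _ h).1 h'
    · exact (hasymm _ _ h).2 hc'.symm
    · exact (hasymm _ _ h').2 hc.symm
    · exact hlt.asymm hlt'

end Orientation

lemma exists_adj_ne_of_not_isBridge {G : SimpleGraph V} {d v : V} (hdv : G.Adj d v)
    (h : ¬ G.IsBridge s(d, v)) : ∃ w ≠ d, G.Adj v w := by
  rw [isBridge_iff, not_not] at h
  obtain ⟨p⟩ := h.symm
  obtain ⟨w, hvw, -⟩ := Walk.not_nil_iff.mp (Walk.not_nil_of_ne (p := p) hdv.ne')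
  rw [deleteEdges_adj] at hvw
  exact ⟨w, fun hwd => hvw.2 (by simp [hwd, Sym2.eq_swap]), hvw.1⟩

lemma exists_isIndepSet_dominating [Finite V] (G : SimpleGraph V) (S : Set V) :
    ∃ A ⊆ S, G.IsIndepSet A ∧ ∀ v ∈ S, v ∉ A → ∃ a ∈ A, G.Adj a v := by
  obtain ⟨A, -, hmax⟩ := Finite.exists_le_maximal (p := fun A : Set V => A ⊆ S ∧ G.IsIndepSet A)
    ⟨Set.empty_subset S, Set.pairwise_empty _⟩
  refine ⟨A, hmax.1.1, hmax.1.2, fun v hvS hvA => ?_⟩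
  by_contra! hv
  refine hvA (hmax.2 ⟨Set.insert_subset hvS hmax.1.1, ?_⟩ (Set.subset_insert v A) (Set.mem_insert v A))
  rw [isIndepSet_iff, Set.pairwise_insert]
  exact ⟨hmax.1.2, fun a ha _ => ⟨fun hva => hv a ha hva.symm, hv a ha⟩⟩

lemma exists_orientation_directed_triangles [Finite V] (G : SimpleGraph V) (d : V)
    (hd : ∀ v ≠ d, G.Adj d v) (hnbr : ∀ v ≠ d, ∃ w ≠ d, G.Adj v w) :
    ∃ R, IsOrientation G R ∧ ∀ u ≠ d, ∃ x y, R d x ∧ R x y ∧ R y d ∧ (u = x ∨ u = y) := by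
  classical
  let : LinearOrder V := IsWellOrder.linearOrder WellOrderingRel
  obtain ⟨A, hAd, hAind, hAdom⟩ := exists_isIndepSet_dominating G {d}ᶜ
  let c : V → Fin 3 := fun v => if v = d then 0 else if v ∈ A then 1 else 2
  have hca {a} (ha : a ∈ A) : c a = 1 := by simp [c, show a ≠ d from hAd ha, ha]
  have hcb {b} (hbd : b ≠ d) (hbA : b ∉ A) : c b = 2 := by simp [c, hbd, hbA]
  have hcd : c d = 0 := by simp [c]
  refine ⟨cyclicClassOrientation G c, isOrientation_cyclicClassOrientation G c, fun u hu => ?_⟩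
  have htri {a b} (ha : a ∈ A) (hbd : b ≠ d) (hbA : b ∉ A) (hab : G.Adj a b) :
      ∃ x y, cyclicClassOrientation G c d x ∧ cyclicClassOrientation G c x y ∧
        cyclicClassOrientation G c y d ∧ (a = x ∨ a = y) ∧ (b = x ∨ b = y) :=
    ⟨a, b, ⟨hd a (hAd ha), .inl (by rw [hca ha, hcd]; rfl)⟩,
      ⟨hab, .inl (by rw [hca ha, hcb hbd hbA]; rfl)⟩,
      ⟨(hd b hbd).symm, .inl (by rw [hcb hbd hbA, hcd]; rfl)⟩, .inl rfl, .inr rfl⟩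
  by_cases huA : u ∈ A
  · obtain ⟨b, hbd, hub⟩ := hnbr u hu
    have hbA : b ∉ A := fun hbA => hAind huA hbA hub.ne hub
    obtain ⟨x, y, h₁, h₂, h₃, hux, -⟩ := htri huA hbd hbA hub
    exact ⟨x, y, h₁, h₂, h₃, hux⟩
  · obtain ⟨a, ha, hau⟩ := hAdom u hu huA
    obtain ⟨x, y, h₁, h₂, h₃, -, hux⟩ := htri ha hu huA hau
    exact ⟨x, y, h₁, h₂, h₃, hux⟩

/-- A standard pair with `|D| = 1` admits a strong orientation with
strong diameter at most 6. -/
theorem sdiam_le_six_of_domination_one {V : Type*} [Fintype V]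
    (G : SimpleGraph V) (D : Set V) (hstd : IsStandardPair G D)
    (hD : D.ncard = 1) :
    ∃ R : V → V → Prop, IsOrientation G R ∧ IsStrong R ∧ sdiamOr R ≤ 6 := by
  obtain ⟨d, rfl⟩ := Set.ncard_eq_one.mp hD
  obtain ⟨hbr, -, hdom, -⟩ := hstd
  have hd : ∀ v ≠ d, G.Adj d v := fun v hv => by
    obtain ⟨_, ⟨rfl, hdv⟩, -⟩ := hdom v hv
    exact hdv
  obtain ⟨R, hR, htri⟩ := exists_orientation_directed_triangles G d hd
    fun v hv => exists_adj_ne_of_not_isBridge (hd v hv) (hbr _)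
  exact ⟨R, hR, isStrong_and_sdiamOr_le_of_directed_triangles d htri⟩
end

section
/- Let G be a connected bridgeless graph, v a vertex of G, and G' the graph obtained from G by adding two new vertices v', v'' together with the edges vv', v'v'', v''v (a pendant triangle at v). Then G' is connected and bridgeless, and the oriented diameter of G' is at least the oriented diameter of G. -/
/-!
Collapsing the triangle `v v' v''` onto `v` maps every arc of a strong orientation of `G'` either
to a loop or to an arc of its restriction to `G`, so directed distances between vertices of `G`
can only shrink, and the restriction has diameter at most that of the orientation of `G'`.
Conversely a strong orientation of `G` extends to `G'` by orienting the triangle cyclically, so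
`G` has a strong orientation only if `G'` does; this settles the case where `G'` has none and its
oriented diameter is the junk value `sInf ∅ = 0`. Bridgelessness of `G'` is inherited from `G` on
the edges of `G`, while each triangle edge avoids the path through the third triangle vertex.
-/

open SimpleGraph

variable {V : Type*}

section DirWalk

variable {W : Type*} {R : V → V → Prop} {R' : W → W → Prop} {u w : V} {n : ℕ}

theorem hasDirWalk_zero_iff : HasDirWalk R u w 0 ↔ u = w := by
  constructor
  · rintro ⟨f, rfl, rfl, -⟩
    rfl
  · rintro rfl
    exact ⟨fun _ => u, rfl, rfl, fun i => i.elim0⟩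

theorem hasDirWalk_succ_iff :
    HasDirWalk R u w (n + 1) ↔ ∃ x, R u x ∧ HasDirWalk R x w n := by
  constructor
  · rintro ⟨f, rfl, rfl, hf⟩
    refine ⟨f 1, hf 0, fun i => f i.succ, rfl, rfl, fun i => ?_⟩
    simpa only [Fin.succ_castSucc] using hf i.succ
  · rintro ⟨x, hux, f, rfl, rfl, hf⟩
    refine ⟨Fin.cons u f, rfl, ?_, Fin.cases hux fun i => ?_⟩
    · rw [← Fin.succ_last, Fin.cons_succ]
    · simpa only [← Fin.succ_castSucc, Fin.cons_succ] using hf i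

theorem exists_hasDirWalk_iff_reflTransGen :
    (∃ n, HasDirWalk R u w n) ↔ Relation.ReflTransGen R u w := by
  constructor
  · rintro ⟨n, h⟩
    induction n generalizing u with
    | zero => exact (hasDirWalk_zero_iff.1 h) ▸ .refl
    | succ n ih =>
      obtain ⟨x, hux, hx⟩ := hasDirWalk_succ_iff.1 h
      exact .head hux (ih hx)
  · intro h
    induction h using Relation.ReflTransGen.head_induction_on with
    | refl => exact ⟨0, hasDirWalk_zero_iff.2 rfl⟩
    | head hux _ ih =>
      obtain ⟨n, hn⟩ := ih
      exact ⟨n + 1, hasDirWalk_succ_iff.2 ⟨_, hux, hn⟩⟩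

theorem isStrong_iff_reflTransGen : IsStrong R ↔ ∀ u w, Relation.ReflTransGen R u w := by
  simp only [IsStrong, exists_hasDirWalk_iff_reflTransGen]

theorem IsStrong.of_forall_reflTransGen_root (r : V) (hto : ∀ u, Relation.ReflTransGen R u r)
    (hfrom : ∀ w, Relation.ReflTransGen R r w) : IsStrong R :=
  isStrong_iff_reflTransGen.2 fun u w => (hto u).trans (hfrom w)

def IsCollapse (g : V → W) (R : V → V → Prop) (R' : W → W → Prop) : Prop :=
  ∀ a b, R a b → g a = g b ∨ R' (g a) (g b)

theorem HasDirWalk.exists_le_of_isCollapse {g : V → W} (hg : IsCollapse g R R')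
    (h : HasDirWalk R u w n) : ∃ m ≤ n, HasDirWalk R' (g u) (g w) m := by
  induction n generalizing u with
  | zero => exact ⟨0, le_rfl, hasDirWalk_zero_iff.2 (congrArg g (hasDirWalk_zero_iff.1 h))⟩
  | succ n ih =>
    obtain ⟨x, hux, hx⟩ := hasDirWalk_succ_iff.1 h
    obtain ⟨m, hmn, hm⟩ := ih hx
    rcases hg u x hux with hgx | hgx
    · exact ⟨m, hmn.trans n.le_succ, hgx ▸ hm⟩
    · exact ⟨m + 1, Nat.succ_le_succ hmn, hasDirWalk_succ_iff.2 ⟨_, hgx, hm⟩⟩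

theorem ddist_le_of_isCollapse {g : V → W} (hg : IsCollapse g R R')
    (h : Relation.ReflTransGen R u w) : ddist R' (g u) (g w) ≤ ddist R u w := by
  obtain ⟨m, hm, hwalk⟩ := HasDirWalk.exists_le_of_isCollapse hg
    (Nat.sInf_mem (exists_hasDirWalk_iff_reflTransGen.2 h))
  exact (Nat.sInf_le hwalk).trans hm

theorem IsStrong.of_isCollapse {g : V → W} (hR : IsStrong R) (hsurj : g.Surjective)
    (hg : IsCollapse g R R') : IsStrong R' := by
  rw [isStrong_iff_reflTransGen] at hR ⊢
  intro x y
  obtain ⟨a, rfl⟩ := hsurj x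
  obtain ⟨b, rfl⟩ := hsurj y
  refine (hR a b).lift' g fun c d hcd => ?_
  rcases hg c d hcd with h | h
  · rw [Function.onFun, h]
  · exact .single h

theorem diamOr_le_of_isCollapse [Fintype V] [Fintype W] {g : V → W} (hR : IsStrong R)
    (hsurj : g.Surjective) (hg : IsCollapse g R R') : diamOr R' ≤ diamOr R := by
  refine Finset.sup_le fun p _ => ?_
  obtain ⟨a, ha⟩ := hsurj p.1
  obtain ⟨b, hb⟩ := hsurj p.2
  have hR' := isStrong_iff_reflTransGen.1 hR
  calc theta R' p.1 p.2 ≤ theta R a b := by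
        rw [← ha, ← hb]
        exact max_le_max (ddist_le_of_isCollapse hg (hR' a b))
          (ddist_le_of_isCollapse hg (hR' b a))
    _ ≤ diamOr R := Finset.le_sup (f := fun q : V × V => theta R q.1 q.2) (Finset.mem_univ (a, b))

end DirWalk

theorem IsOrientation.comap {W : Type*} {H : SimpleGraph W} {R : W → W → Prop} (f : V → W)
    (hR : IsOrientation H R) : IsOrientation (H.comap f) fun x y => R (f x) (f y) :=
  ⟨fun _ _ h => hR.1 _ _ h, fun _ _ h => hR.2.1 _ _ h, fun _ _ h => hR.2.2 _ _ h⟩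

theorem orientedDiam_le_of_forall {W : Type*} [Fintype V] [Fintype W] {G : SimpleGraph V}
    {H : SimpleGraph W}
    (hext : ∀ R, IsOrientation G R → IsStrong R → ∃ R', IsOrientation H R' ∧ IsStrong R')
    (hres : ∀ R', IsOrientation H R' → IsStrong R' →
      ∃ R, IsOrientation G R ∧ IsStrong R ∧ diamOr R ≤ diamOr R') :
    orientedDiam G ≤ orientedDiam H := by
  rcases Set.eq_empty_or_nonempty
    {d | ∃ R', IsOrientation H R' ∧ IsStrong R' ∧ diamOr R' = d} with hH | hH
  · suffices {d | ∃ R, IsOrientation G R ∧ IsStrong R ∧ diamOr R = d} = ∅ by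
      rw [orientedDiam, orientedDiam, this, hH]
    refine Set.eq_empty_of_forall_notMem fun d hd => ?_
    obtain ⟨R, hR, hRs, -⟩ := hd
    obtain ⟨R', hR', hR's⟩ := hext R hR hRs
    exact hH.subset ⟨R', hR', hR's, rfl⟩
  · obtain ⟨R', hR', hR's, hd⟩ := Nat.sInf_mem hH
    obtain ⟨R, hR, hRs, hle⟩ := hres R' hR' hR's
    exact (Nat.sInf_le (⟨R, hR, hRs, rfl⟩ : ∃ R, _)).trans (hle.trans_eq hd)

section Bridges

variable {W : Type*} {G : SimpleGraph V} {H : SimpleGraph W} {x y w : V}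

/-- With `IsBridge` defined through reachability in `G \ e`, an unreachable non-adjacent pair
also counts as a bridge, so bridgeless graphs are automatically preconnected. -/
theorem IsBridgeless.preconnected (hG : IsBridgeless G) : G.Preconnected := fun x y =>
  (not_not.1 (hG s(x, y))).mono (deleteEdges_le _)

theorem not_isBridge_of_adj_of_adj (hxw : G.Adj x w) (hwy : G.Adj w y) : ¬ G.IsBridge s(x, y) := by
  rw [isBridge_iff_forall_walk_mem_edges, not_forall]
  refine ⟨.cons hxw (.cons hwy .nil), ?_⟩
  simp only [Walk.edges_cons, Walk.edges_nil, List.mem_cons, List.not_mem_nil, or_false,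
    Sym2.eq_iff, not_or, not_and]
  exact ⟨⟨fun _ h => hwy.ne h.symm, fun h => (hxw.ne h).elim⟩, fun h => (hxw.ne h).elim,
    fun _ h => hwy.ne h.symm⟩

theorem not_isBridge_map (f : G →g H) (hf : Function.Injective f)
    (h : ¬ G.IsBridge s(x, y)) : ¬ H.IsBridge s(f x, f y) := by
  rw [isBridge_iff_forall_walk_mem_edges, not_forall] at h ⊢
  obtain ⟨p, hp⟩ := h
  refine ⟨p.map f, fun hmem => hp ?_⟩
  rw [Walk.edges_map, List.mem_map] at hmem
  obtain ⟨e, he, hfe⟩ := hmem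
  rwa [← (Sym2.map.injective hf) (hfe.trans (Sym2.map_mk f x y).symm)]

end Bridges

namespace PendantTriangle

variable {G : SimpleGraph V} {v x y : V} {i j : Fin 2}

@[simp] theorem adj_inl_inl : (pendantTriangle G v).Adj (.inl x) (.inl y) ↔ G.Adj x y := by
  simpa [pendantTriangle, G.adj_comm y x] using fun h : G.Adj x y => h.ne

@[simp] theorem adj_inl_inr : (pendantTriangle G v).Adj (.inl x) (.inr i) ↔ x = v := by
  simp [pendantTriangle]

@[simp] theorem adj_inr_inl : (pendantTriangle G v).Adj (.inr i) (.inl x) ↔ x = v := by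
  simp [pendantTriangle]

@[simp] theorem adj_inr_inr : (pendantTriangle G v).Adj (.inr i) (.inr j) ↔ i ≠ j := by
  simp [pendantTriangle, eq_comm]

theorem comap_inl : (pendantTriangle G v).comap Sum.inl = G := by
  ext
  simp

def inlHom (G : SimpleGraph V) (v : V) : G →g pendantTriangle G v :=
  ⟨Sum.inl, adj_inl_inl.2⟩

theorem connected (hG : G.Preconnected) : (pendantTriangle G v).Connected := by
  refine (connected_iff_exists_forall_reachable _).2 ⟨.inl v, ?_⟩
  rintro (x | i)
  · exact (hG v x).map (inlHom G v)
  · exact (adj_inl_inr.2 rfl).reachable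

theorem isBridgeless (hG : IsBridgeless G) : IsBridgeless (pendantTriangle G v) := by
  intro e hbr
  induction e using Sym2.ind with | _ a b =>
  have hab := hbr.reachable_iff_adj.1 ((connected hG.preconnected).preconnected a b)
  refine absurd hbr ?_
  rcases a with x | i <;> rcases b with y | j
  · exact not_isBridge_map (inlHom G v) Sum.inl_injective (hG s(x, y))
  · obtain rfl := adj_inl_inr.1 hab
    exact not_isBridge_of_adj_of_adj (w := .inr (j + 1)) (by simp) (by simp)
  · obtain rfl := adj_inr_inl.1 hab
    exact not_isBridge_of_adj_of_adj (w := .inr (i + 1)) (by simp) (by simp)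
  · exact not_isBridge_of_adj_of_adj (w := .inl v) (by simp) (by simp)

def extendOrientation (R : V → V → Prop) (v : V) : V ⊕ Fin 2 → V ⊕ Fin 2 → Prop
  | .inl x, .inl y => R x y
  | .inl x, .inr i => x = v ∧ i = 0
  | .inr i, .inl x => i = 1 ∧ x = v
  | .inr i, .inr j => i = 0 ∧ j = 1

theorem isOrientation_extendOrientation {R : V → V → Prop} (hR : IsOrientation G R) :
    IsOrientation (pendantTriangle G v) (extendOrientation R v) := by
  obtain ⟨hadj, htotal, hasymm⟩ := hR
  refine ⟨?_, ?_, ?_⟩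
  · rintro (x | i) (y | j) h <;> simp_all [extendOrientation]
  · rintro (x | i) (y | j) h <;> simp_all [extendOrientation] <;> omega
  · rintro (x | i) (y | j) h <;> simp_all [extendOrientation]

theorem isStrong_extendOrientation {R : V → V → Prop} (hR : IsStrong R) :
    IsStrong (extendOrientation R v) := by
  have hR' := isStrong_iff_reflTransGen.1 hR
  have h01 : extendOrientation R v (.inr 0) (.inr 1) := ⟨rfl, rfl⟩
  have h1v : extendOrientation R v (.inr 1) (.inl v) := ⟨rfl, rfl⟩
  have hv0 : extendOrientation R v (.inl v) (.inr 0) := ⟨rfl, rfl⟩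
  refine .of_forall_reflTransGen_root (.inl v) ?_ ?_
  · rintro (x | i)
    · exact (hR' x v).lift Sum.inl fun _ _ h => h
    · fin_cases i
      · exact .head h01 (.single h1v)
      · exact .single h1v
  · rintro (x | i)
    · exact (hR' v x).lift Sum.inl fun _ _ h => h
    · fin_cases i
      · exact .single hv0
      · exact .head hv0 (.single h01)

def collapse (v : V) : V ⊕ Fin 2 → V :=
  Sum.elim id fun _ => v

theorem collapse_surjective : (collapse v).Surjective :=
  fun x => ⟨.inl x, rfl⟩

theorem isCollapse_collapse {R : V ⊕ Fin 2 → V ⊕ Fin 2 → Prop}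
    (hR : IsOrientation (pendantTriangle G v) R) :
    IsCollapse (collapse v) R fun x y => R (.inl x) (.inl y) := by
  rintro (x | i) (y | j) h
  · exact .inr h
  · exact .inl (adj_inl_inr.1 (hR.1 _ _ h))
  · exact .inl (adj_inr_inl.1 (hR.1 _ _ h)).symm
  · exact .inl rfl

end PendantTriangle

open PendantTriangle in
theorem pendantTriangle_oriented_diam_ge_general {V : Type*} [Fintype V]
    (G : SimpleGraph V) (v : V)
    (hbridgeless : IsBridgeless G) :
    (pendantTriangle G v).Connected ∧ IsBridgeless (pendantTriangle G v) ∧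
      orientedDiam G ≤ orientedDiam (pendantTriangle G v) := by
  refine ⟨connected hbridgeless.preconnected, isBridgeless hbridgeless,
    orientedDiam_le_of_forall (fun R hR hRs => ⟨_, isOrientation_extendOrientation hR,
      isStrong_extendOrientation hRs⟩) fun R hR hRs => ?_⟩
  refine ⟨_, ?_, hRs.of_isCollapse collapse_surjective (isCollapse_collapse hR),
    diamOr_le_of_isCollapse hRs collapse_surjective (isCollapse_collapse hR)⟩
  simpa only [comap_inl] using hR.comap Sum.inl

/-- Attaching a pendant triangle at a vertex of a connected bridgeless graph
keeps it connected and bridgeless and does not decrease the oriented diameter. -/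
theorem pendantTriangle_oriented_diam_ge {V : Type*} [Fintype V]
    (G : SimpleGraph V) (v : V)
    (hconn : G.Connected) (hbridgeless : IsBridgeless G) :
    (pendantTriangle G v).Connected ∧ IsBridgeless (pendantTriangle G v) ∧
      orientedDiam G ≤ orientedDiam (pendantTriangle G v) :=
  pendantTriangle_oriented_diam_ge_general G v hbridgeless
end
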